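/- arXiv:1807.06341 — 6 statements merged into one kernel-verified Lean document; each statement's English description precedes it below -/
import Mathlib

section
/- Let H be a complex Hilbert space, T a bounded linear operator on H, and v ∈ H. Let P be the orthogonal projection of H onto [Tv], the closed linear span of {T^n v : n ≥ 1}. Then (a) for every n ≥ 1 one has ⟪v − P v, T^n (v − P v)⟫ = 0, so that v − P v is T-inner or zero; and (b) if v satisfies ⟪v, T^n v⟫ = 0 for all n ≥ 1, then P v = 0, so v = v − P v; hence every T-inner vector arises as w − P_{[Tw]} w for some w ∈ H. -/
/-!
`[Tv]` is closed and invariant under every `T^n`, so for `n ≥ 1` the vector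
`T^n (v - P v) = T^n v - T^n (P v)` lies in `[Tv]`, to which `v - P v` is orthogonal.
If `v` is `T`-inner, it is orthogonal to the generators of `[Tv]`, hence to `[Tv]`, so `P v = 0`.
-/

open scoped ComplexInnerProductSpace

/-- The closed linear span of `{T^n v : n ≥ 1}`. -/
abbrev cyclicSpanTv {H : Type*} [NormedAddCommGroup H] [InnerProductSpace ℂ H]
    (T : H →L[ℂ] H) (v : H) : Submodule ℂ H :=
  (Submodule.span ℂ {x | ∃ n : ℕ, 1 ≤ n ∧ x = (T ^ n) v}).topologicalClosure

/-- `P v`, the orthogonal projection of `v` onto `[Tv]`. -/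
noncomputable def projTv {H : Type*} [NormedAddCommGroup H] [InnerProductSpace ℂ H]
    [CompleteSpace H] (T : H →L[ℂ] H) (v : H) : H :=
  ((cyclicSpanTv T v).orthogonalProjection v : H)

theorem Submodule.inner_sub_starProjection_apply_eq_zero {𝕜 E : Type*} [RCLike 𝕜]
    [NormedAddCommGroup E] [InnerProductSpace 𝕜 E] (K : Submodule 𝕜 E)
    [K.HasOrthogonalProjection] {S : E →L[𝕜] E}
    (hK : K ∈ Module.End.invtSubmodule (S : E →ₗ[𝕜] E)) {v : E} (hv : S v ∈ K) :
    inner 𝕜 (v - K.starProjection v) (S (v - K.starProjection v)) = 0 := by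
  have hSv : S (v - K.starProjection v) ∈ K := by
    rw [map_sub]
    exact K.sub_mem hv (hK (K.starProjection_apply_mem v))
  exact K.inner_left_of_mem_orthogonal hSv (K.sub_starProjection_mem_orthogonal v)

section CyclicSpan

variable {H : Type*} [NormedAddCommGroup H] [InnerProductSpace ℂ H] (T : H →L[ℂ] H) (v : H)

theorem pow_apply_mem_cyclicSpanTv {n : ℕ} (hn : 1 ≤ n) : (T ^ n) v ∈ cyclicSpanTv T v :=
  Submodule.le_topologicalClosure _ (Submodule.subset_span ⟨n, hn, rfl⟩)

theorem cyclicSpanTv_mem_invtSubmodule_pow (k : ℕ) :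
    cyclicSpanTv T v ∈ Module.End.invtSubmodule ((T ^ k : H →L[ℂ] H) : H →ₗ[ℂ] H) := by
  refine Submodule.topologicalClosure_mem_invtSubmodule ?_
  rw [Module.End.mem_invtSubmodule, Submodule.span_le]
  rintro _ ⟨n, hn, rfl⟩
  exact Submodule.subset_span ⟨k + n, by omega, by rw [pow_add]; rfl⟩

theorem mem_orthogonal_cyclicSpanTv (hv : ∀ n : ℕ, 1 ≤ n → ⟪v, (T ^ n) v⟫ = 0) :
    v ∈ (cyclicSpanTv T v)ᗮ := by
  have hle : cyclicSpanTv T v ≤ (ℂ ∙ v)ᗮ := by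
    refine Submodule.topologicalClosure_minimal _ ?_ (Submodule.isClosed_orthogonal _)
    rw [Submodule.span_le]
    rintro _ ⟨n, hn, rfl⟩
    exact Submodule.mem_orthogonal_singleton_iff_inner_right.mpr (hv n hn)
  rw [Submodule.mem_orthogonal]
  exact fun u hu ↦ Submodule.mem_orthogonal_singleton_iff_inner_left.mp (hle hu)

theorem projTv_eq_starProjection [CompleteSpace H] :
    projTv T v = (cyclicSpanTv T v).starProjection v :=
  (Submodule.starProjection_apply _ v).symm

end CyclicSpan

/-- Proposition (Cheng–Mashreghi–Ross): `v − P v` is `T`-inner (or zero), and every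
`T`-inner vector arises this way (a `T`-inner `v` satisfies `P v = 0`, so `v = v − P v`). -/
theorem stmt0 {H : Type*} [NormedAddCommGroup H] [InnerProductSpace ℂ H] [CompleteSpace H]
    (T : H →L[ℂ] H) (v : H) :
    (∀ n : ℕ, 1 ≤ n → ⟪v - projTv T v, (T ^ n) (v - projTv T v)⟫ = 0) ∧
      ((∀ n : ℕ, 1 ≤ n → ⟪v, (T ^ n) v⟫ = 0) → projTv T v = 0) := by
  rw [projTv_eq_starProjection]
  refine ⟨fun n hn ↦ ?_, fun hv ↦ ?_⟩
  · exact (cyclicSpanTv T v).inner_sub_starProjection_apply_eq_zero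
      (cyclicSpanTv_mem_invtSubmodule_pow T v n) (pow_apply_mem_cyclicSpanTv T v hn)
  · exact ((cyclicSpanTv T v).starProjection_apply_eq_zero_iff).mpr
      (mem_orthogonal_cyclicSpanTv T v hv)
end

section
/- Fix an integer n ≥ 1 and let T be the nilpotent Jordan operator on ℂⁿ defined on the standard basis e₀, e₁, …, e_{n−1} by T e_j = e_{j+1} for 0 ≤ j ≤ n−2 and T e_{n−1} = 0. Then a nonzero vector v ∈ ℂⁿ satisfies ⟪v, T^m v⟫ = 0 for all m ≥ 1 if and only if v = c e_j for some scalar c ∈ ℂ ∖ {0} and some index 0 ≤ j ≤ n−1; that is, the T-inner vectors are exactly the nonzero scalar multiples of the standard basis vectors. -/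
open scoped ComplexInnerProductSpace InnerProductSpace

/-!
In coordinates `⟪v, T^m v⟫ = ∑ᵢ conj (vᵢ) v_{i-m}` is the autocorrelation of `v` at lag `m`.
If the support of `v` runs from `q` to `p > q`, then at lag `p - q` only the term `i = p`
survives, and it equals `conj (v_p) v_q ≠ 0`. Hence a `T`-inner vector is supported at a single
index; conversely `T^m e_j` is orthogonal to `e_j` for `m ≥ 1`.
-/

section

variable {𝕜 : Type*} [RCLike 𝕜] {n : ℕ}

def IsForwardShift (T : EuclideanSpace 𝕜 (Fin n) →ₗ[𝕜] EuclideanSpace 𝕜 (Fin n)) : Prop :=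
  ∀ (v : EuclideanSpace 𝕜 (Fin n)) (i : Fin n),
    T v i = if (i : ℕ) = 0 then 0
      else v ⟨(i : ℕ) - 1, Nat.lt_of_le_of_lt (Nat.sub_le _ _) i.isLt⟩

namespace IsForwardShift

variable {T : EuclideanSpace 𝕜 (Fin n) →ₗ[𝕜] EuclideanSpace 𝕜 (Fin n)}

theorem pow_apply (hT : IsForwardShift T) (m : ℕ) (w : EuclideanSpace 𝕜 (Fin n)) (i : Fin n) :
    (T ^ m) w i = if (i : ℕ) < m then 0
      else w ⟨(i : ℕ) - m, Nat.lt_of_le_of_lt (Nat.sub_le _ _) i.isLt⟩ := by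
  induction m generalizing i with
  | zero => simp
  | succ m ih =>
    rw [pow_succ', Module.End.mul_apply, hT, ih]
    simp only [Fin.val_mk]
    split_ifs <;> first | rfl | omega | exact congrArg w (Fin.ext (by dsimp only; omega))

theorem inner_pow_eq_of_support_subset_Icc (hT : IsForwardShift T) {v : EuclideanSpace 𝕜 (Fin n)}
    {p q : Fin n} (hqp : q ≤ p) (hq : ∀ i, v i ≠ 0 → q ≤ i) (hp : ∀ i, v i ≠ 0 → i ≤ p) :
    ⟪v, (T ^ ((p : ℕ) - q)) v⟫_𝕜 = starRingEnd 𝕜 (v p) * v q := by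
  have hqp : (q : ℕ) ≤ p := hqp
  rw [PiLp.inner_apply, Finset.sum_eq_single p]
  · rw [RCLike.inner_apply', hT.pow_apply, if_neg (by omega)]
    exact congrArg _ (congrArg v (Fin.ext (by simp only; omega)))
  · intro i _ hip
    by_cases hvi : v i = 0
    · simp [hvi]
    have hip : (i : ℕ) < p := lt_of_le_of_ne (hp i hvi) (Fin.val_ne_of_ne hip)
    rw [RCLike.inner_apply', hT.pow_apply]
    split_ifs with hlt
    · exact mul_zero _
    · have hq' := mt (hq ⟨(i : ℕ) - ((p : ℕ) - q), Nat.lt_of_le_of_lt (Nat.sub_le _ _) i.isLt⟩)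
        (by rw [Fin.le_def]; simp only; omega)
      rw [not_ne_iff.mp hq', mul_zero]
  · simp

theorem inner_pow_smul_single_eq_zero (hT : IsForwardShift T) (c : 𝕜) (j : Fin n) {m : ℕ}
    (hm : 1 ≤ m) :
    ⟪c • EuclideanSpace.single j 1, (T ^ m) (c • EuclideanSpace.single j 1)⟫_𝕜 = 0 := by
  rw [inner_smul_left, EuclideanSpace.inner_single_left, hT.pow_apply]
  split_ifs
  · simp
  · simp [PiLp.single_apply, Fin.ext_iff]
    omega

theorem exists_eq_smul_single_of_inner_pow_eq_zero (hT : IsForwardShift T)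
    {v : EuclideanSpace 𝕜 (Fin n)} (hv : v ≠ 0) (h : ∀ m : ℕ, 1 ≤ m → ⟪v, (T ^ m) v⟫_𝕜 = 0) :
    ∃ (c : 𝕜) (j : Fin n), c ≠ 0 ∧ v = c • EuclideanSpace.single j 1 := by
  classical
  obtain ⟨i₀, hi₀⟩ : ∃ i, v i ≠ 0 := by
    by_contra! h₀
    exact hv (by ext i; exact h₀ i)
  set s := Finset.univ.filter fun i ↦ v i ≠ 0
  have hs : s.Nonempty := ⟨i₀, by simpa [s] using hi₀⟩
  set p := s.max' hs
  set q := s.min' hs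
  have hp : ∀ i, v i ≠ 0 → i ≤ p := fun i hi ↦ s.le_max' i (by simpa [s] using hi)
  have hq : ∀ i, v i ≠ 0 → q ≤ i := fun i hi ↦ s.min'_le i (by simpa [s] using hi)
  have hvp : v p ≠ 0 := by simpa [s] using s.max'_mem hs
  have hvq : v q ≠ 0 := by simpa [s] using s.min'_mem hs
  have hqp : q = p := by
    by_contra hne
    have hlt : (q : ℕ) < p := lt_of_le_of_ne (hq p hvp) (Fin.val_ne_of_ne hne)
    refine mul_ne_zero ((map_ne_zero (starRingEnd 𝕜)).mpr hvp) hvq ?_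
    rw [← hT.inner_pow_eq_of_support_subset_Icc (hq p hvp) hq hp]
    exact h _ (by omega)
  refine ⟨v p, p, hvp, ?_⟩
  ext i
  by_cases hip : i = p
  · simp [hip]
  · have hvi : v i = 0 := by
      by_contra hvi
      exact hip (le_antisymm (hp i hvi) (hqp ▸ hq i hvi))
    simp [hip, hvi]

end IsForwardShift

end

theorem stmt3_general (n : ℕ)
    (T : EuclideanSpace ℂ (Fin n) →ₗ[ℂ] EuclideanSpace ℂ (Fin n))
    (hT : ∀ (v : EuclideanSpace ℂ (Fin n)) (i : Fin n),
      T v i = if (i : ℕ) = 0 then 0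
        else v ⟨(i : ℕ) - 1, Nat.lt_of_le_of_lt (Nat.sub_le _ _) i.isLt⟩)
    (v : EuclideanSpace ℂ (Fin n)) (hv : v ≠ 0) :
    (∀ m : ℕ, 1 ≤ m → ⟪v, (T ^ m) v⟫ = 0) ↔
      ∃ (c : ℂ) (j : Fin n), c ≠ 0 ∧ v = c • EuclideanSpace.single j 1 := by
  have hT : IsForwardShift T := hT
  refine ⟨hT.exists_eq_smul_single_of_inner_pow_eq_zero hv, ?_⟩
  rintro ⟨c, j, -, rfl⟩ m hm
  exact hT.inner_pow_smul_single_eq_zero c j hm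

/-- For the nilpotent Jordan operator `T` on `ℂⁿ` with `T e_j = e_{j+1}` (and
`T e_{n-1} = 0`), a nonzero vector `v` is `T`-inner iff it is a nonzero scalar
multiple of a standard basis vector. -/
theorem stmt3 (n : ℕ) (hn : 1 ≤ n)
    (T : EuclideanSpace ℂ (Fin n) →ₗ[ℂ] EuclideanSpace ℂ (Fin n))
    (hT : ∀ (v : EuclideanSpace ℂ (Fin n)) (i : Fin n),
      T v i = if (i : ℕ) = 0 then 0
        else v ⟨(i : ℕ) - 1, Nat.lt_of_le_of_lt (Nat.sub_le _ _) i.isLt⟩)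
    (v : EuclideanSpace ℂ (Fin n)) (hv : v ≠ 0) :
    (∀ m : ℕ, 1 ≤ m → ⟪v, (T ^ m) v⟫ = 0) ↔
      ∃ (c : ℂ) (j : Fin n), c ≠ 0 ∧ v = c • EuclideanSpace.single j 1 :=
  stmt3_general n T hT v hv
end

section
/- Let H be a complex Hilbert space with inner product ⟪·,·⟫ conjugate-linear in the first argument, let S be a bounded linear operator on H with adjoint S†, let w ∈ ℂ, and let k₀, k_w ∈ H satisfy S† k₀ = 0 and S† k_w = conj(w) • k_w. Then the vector v := ‖k_w‖² • k₀ − ⟪k_w, k₀⟫ • k_w satisfies ⟪v, Sⁿ v⟫ = 0 for every n ≥ 1; in particular, if v ≠ 0 it is S-inner. -/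
/-!
Write `v = ‖k_w‖² k₀ − ⟪k_w, k₀⟫ k_w`. It is orthogonal to `k_w`, and `S† v = −conj(w) ⟪k_w, k₀⟫ k_w`
lies on the line through `k_w`. Since `k_w` is an eigenvector of `S†`, the orthogonal complement of `k_w`
is `S`-invariant, so every `Sᵐ v` is orthogonal to `k_w`, and
`⟪v, Sᵐ⁺¹ v⟫ = ⟪S† v, Sᵐ v⟫` is a multiple of `⟪k_w, Sᵐ v⟫ = 0`.
-/

open scoped ComplexInnerProductSpace

open ContinuousLinearMap

section

variable {𝕜 E : Type*} [RCLike 𝕜] [NormedAddCommGroup E] [InnerProductSpace 𝕜 E]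

theorem inner_norm_sq_smul_sub_inner_smul_self (u a : E) :
    inner 𝕜 u ((‖u‖ : 𝕜) ^ 2 • a - inner 𝕜 u a • u) = 0 := by
  rw [inner_sub_right, inner_smul_right, inner_smul_right, inner_self_eq_norm_sq_to_K, mul_comm,
    sub_self]

variable [CompleteSpace E] {S : E →L[𝕜] E} {x : E} {c : 𝕜}

theorem inner_pow_apply_eq_zero_of_adjoint_eq_smul (hx : adjoint S x = c • x) {y : E}
    (hxy : inner 𝕜 x y = 0) (m : ℕ) : inner 𝕜 x ((S ^ m) y) = 0 := by
  induction m with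
  | zero => simpa using hxy
  | succ m ih =>
    rw [pow_succ', mul_apply_eq_comp, ← adjoint_inner_left, hx, inner_smul_left, ih, mul_zero]

theorem inner_pow_succ_apply_self_eq_zero (hx : adjoint S x = c • x) {v : E} {d : 𝕜}
    (hv : adjoint S v = d • x) (hxv : inner 𝕜 x v = 0) (m : ℕ) :
    inner 𝕜 v ((S ^ (m + 1)) v) = 0 := by
  rw [pow_succ', mul_apply_eq_comp, ← adjoint_inner_left, hv, inner_smul_left,
    inner_pow_apply_eq_zero_of_adjoint_eq_smul hx hxv, mul_zero]

end

/-- If `S† k₀ = 0` and `S† k_w = conj(w) • k_w`, then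
`v = ‖k_w‖² • k₀ − ⟪k_w, k₀⟫ • k_w` satisfies `⟪v, Sⁿ v⟫ = 0` for all `n ≥ 1`;
in particular, if `v ≠ 0` it is `S`-inner.  (In an RKHS, `k₀` and `k_w` are the
reproducing kernels at `0` and `w` and `S` is the shift.) -/
theorem stmt4 {H : Type*} [NormedAddCommGroup H] [InnerProductSpace ℂ H] [CompleteSpace H]
    (S : H →L[ℂ] H) (w : ℂ) (k₀ kw : H)
    (h₀ : ContinuousLinearMap.adjoint S k₀ = 0)
    (hw : ContinuousLinearMap.adjoint S kw = (starRingEnd ℂ w) • kw) :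
    ∀ n : ℕ, 1 ≤ n →
      ⟪((‖kw‖ : ℂ) ^ 2 • k₀ - ⟪kw, k₀⟫ • kw), (S ^ n) ((‖kw‖ : ℂ) ^ 2 • k₀ - ⟪kw, k₀⟫ • kw)⟫ = 0 := by
  intro n hn
  obtain ⟨m, rfl⟩ := Nat.exists_eq_add_of_le' hn
  have hadj : adjoint S ((‖kw‖ : ℂ) ^ 2 • k₀ - ⟪kw, k₀⟫ • kw)
      = (-(⟪kw, k₀⟫ * starRingEnd ℂ w)) • kw := by
    rw [map_sub, map_smul, map_smul, h₀, hw, smul_zero, zero_sub, smul_smul, neg_smul]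
  exact inner_pow_succ_apply_self_eq_zero hw hadj (inner_norm_sq_smul_sub_inner_smul_self kw k₀) m
end

section
/- Let H be a complex Hilbert space and S a bounded linear operator on H with ‖S‖ ≤ 1. Let J ∈ H satisfy ⟪J, Sⁿ J⟫ = 0 for all n ≥ 1 (J is S-inner). Then for every finitely supported sequence of complex coefficients F₀, F₁, …, F_d one has ‖∑_{k=0}^{d} F_k S^k J‖² ≤ ‖J‖² · ∑_{k=0}^{d} |F_k|². -/
open scoped ComplexInnerProductSpace

/-- If `‖S‖ ≤ 1` and `J` is `S`-inner, then for any polynomial coefficients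
`F₀, …, F_d` one has `‖∑ F_k S^k J‖² ≤ ‖J‖² ∑ |F_k|²`. -/
theorem stmt9 {H : Type*} [NormedAddCommGroup H] [InnerProductSpace ℂ H] [CompleteSpace H]
    (S : H →L[ℂ] H) (hS : ‖S‖ ≤ 1) (J : H)
    (hJ : ∀ n : ℕ, 1 ≤ n → ⟪J, (S ^ n) J⟫ = 0)
    (d : ℕ) (c : ℕ → ℂ) :
    ‖∑ k ∈ Finset.range (d + 1), c k • (S ^ k) J‖ ^ 2 ≤
      ‖J‖ ^ 2 * ∑ k ∈ Finset.range (d + 1), ‖c k‖ ^ 2 := by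
  induction d generalizing c with
  | zero =>
    simp [norm_smul, mul_pow, mul_comm]
  | succ d ih =>
    set w : H := ∑ k ∈ Finset.range (d + 1), c (k + 1) • (S ^ k) J with hw
    have hpow : ∀ k : ℕ, (S ^ (k + 1)) J = S ((S ^ k) J) := by
      intro k
      rw [pow_succ']
      rfl
    have hsum : ∑ k ∈ Finset.range (d + 2), c k • (S ^ k) J = S w + c 0 • J := by
      rw [Finset.sum_range_succ', hw, map_sum]
      simp only [hpow, map_smul]
      simp
    have hJw : ⟪J, S w⟫ = 0 := by
      rw [hw, map_sum, inner_sum]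
      refine Finset.sum_eq_zero fun k _ => ?_
      rw [map_smul, inner_smul_right, ← hpow, hJ (k + 1) (Nat.succ_le_succ (Nat.zero_le k)),
        mul_zero]
    have horth : ⟪S w, c 0 • J⟫ = 0 := by
      rw [inner_smul_right, ← inner_conj_symm, hJw]
      simp
    have hnorm : ‖S w + c 0 • J‖ ^ 2 = ‖S w‖ ^ 2 + ‖c 0 • J‖ ^ 2 := by
      rw [norm_add_sq (𝕜 := ℂ), horth]
      simp
    have hSw : ‖S w‖ ^ 2 ≤ ‖w‖ ^ 2 := by
      have h1 : ‖S w‖ ≤ ‖w‖ := by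
        calc ‖S w‖ ≤ ‖S‖ * ‖w‖ := S.le_opNorm w
        _ ≤ 1 * ‖w‖ := by gcongr
        _ = ‖w‖ := one_mul _
      exact pow_le_pow_left₀ (norm_nonneg _) h1 2
    have hih : ‖w‖ ^ 2 ≤ ‖J‖ ^ 2 * ∑ k ∈ Finset.range (d + 1), ‖c (k + 1)‖ ^ 2 :=
      ih (fun k => c (k + 1))
    have hrhs : ∑ k ∈ Finset.range (d + 2), ‖c k‖ ^ 2 =
        (∑ k ∈ Finset.range (d + 1), ‖c (k + 1)‖ ^ 2) + ‖c 0‖ ^ 2 :=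
      Finset.sum_range_succ' _ _
    have hc0 : ‖c 0 • J‖ ^ 2 = ‖J‖ ^ 2 * ‖c 0‖ ^ 2 := by
      rw [norm_smul, mul_pow, mul_comm]
    rw [hsum, hnorm, hrhs, mul_add, hc0]
    linarith
end

section
/- Let H be a complex Hilbert space and S a bounded linear operator on H such that ‖S g‖ ≥ ‖g‖ for every g ∈ H. Let J ∈ H satisfy ⟪J, Sⁿ J⟫ = 0 for all n ≥ 1 (J is S-inner). Then for every finitely supported sequence of complex coefficients F₀, F₁, …, F_d one has ‖∑_{k=0}^{d} F_k S^k J‖² ≥ ‖J‖² · ∑_{k=0}^{d} |F_k|². -/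
open scoped ComplexInnerProductSpace

/-- If `‖S g‖ ≥ ‖g‖ for all `g` and `J` is `S`-inner, then for any polynomial
coefficients `F₀, …, F_d` one has `‖∑ F_k S^k J‖² ≥ ‖J‖² ∑ |F_k|²`. -/
theorem stmt10 {H : Type*} [NormedAddCommGroup H] [InnerProductSpace ℂ H] [CompleteSpace H]
    (S : H →L[ℂ] H) (hS : ∀ g : H, ‖g‖ ≤ ‖S g‖) (J : H)
    (hJ : ∀ n : ℕ, 1 ≤ n → ⟪J, (S ^ n) J⟫ = 0)
    (d : ℕ) (c : ℕ → ℂ) :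
    ‖J‖ ^ 2 * ∑ k ∈ Finset.range (d + 1), ‖c k‖ ^ 2 ≤
      ‖∑ k ∈ Finset.range (d + 1), c k • (S ^ k) J‖ ^ 2 := by
  induction d generalizing c with
  | zero =>
    simp [norm_smul, mul_pow]
    ring_nf
    exact le_refl _
  | succ d ih =>
    set g : H := ∑ k ∈ Finset.range (d + 1), c (k + 1) • (S ^ k) J with hg
    have key : ∑ k ∈ Finset.range (d + 2), c k • (S ^ k) J = c 0 • J + S g := by
      rw [Finset.sum_range_succ' (fun k => c k • (S ^ k) J) (d + 1)]
      rw [hg, map_sum, add_comm]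
      congr 1
      refine Finset.sum_congr rfl fun k _ => ?_
      rw [map_smul, pow_succ', ContinuousLinearMap.mul_apply]
    have horth : ⟪c 0 • J, S g⟫ = 0 := by
      rw [hg, map_sum, inner_sum]
      refine Finset.sum_eq_zero fun k _ => ?_
      have hSk : S ((S ^ k) J) = (S ^ (k + 1)) J := by
        rw [pow_succ']; rfl
      rw [map_smul, inner_smul_right, inner_smul_left, hSk, hJ (k + 1) (by omega)]
      ring
    have hnorm : ‖∑ k ∈ Finset.range (d + 2), c k • (S ^ k) J‖ ^ 2
        = ‖c 0 • J‖ ^ 2 + ‖S g‖ ^ 2 := by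
      rw [key, norm_add_sq (𝕜 := ℂ), horth]
      simp
    have h1 := ih (fun k => c (k + 1))
    have h2 : ‖g‖ ^ 2 ≤ ‖S g‖ ^ 2 := by
      have := hS g
      nlinarith [norm_nonneg g]
    rw [hnorm, Finset.sum_range_succ' (fun k => ‖c k‖ ^ 2) (d + 1), mul_add,
      norm_smul, mul_pow]
    have : ‖J‖ ^ 2 * ∑ k ∈ Finset.range (d + 1), ‖c (k + 1)‖ ^ 2 ≤ ‖S g‖ ^ 2 :=
      le_trans h1 (le_trans (le_of_eq rfl) h2)
    nlinarith [norm_nonneg (c 0), norm_nonneg J]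
end

section
/- Let X be a complex normed vector space, T a bounded linear operator on X with Banach-space adjoint T* acting on the dual X*, and x ∈ X ∖ {0}. Suppose ℓ ∈ X* is a norming functional for x, i.e. ‖ℓ‖ = 1 and ℓ(x) = ‖x‖, and suppose ℓ(Tᵏ x) = 0 for all k ≥ 1. Then ℓ is T*-inner in the Birkhoff–James sense: for every k ≥ 1 and every β ∈ ℂ, ‖ℓ + β (T*)ᵏ ℓ‖ ≥ ‖ℓ‖. -/
/-! A functional attaining its norm at `x` is Birkhoff–James orthogonal to every functional
vanishing at `x`: evaluating `φ + ψ` at `x` already gives `‖φ‖ ‖x‖`. Since `((T*)ᵏℓ) x = ℓ (Tᵏ x) = 0`,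
this applies to the norming functional `ℓ` and `ψ = β (T*)ᵏℓ`. -/

namespace ContinuousLinearMap

theorem pow_apply_eq_apply_pow {𝕜 E F : Type*} [NontriviallyNormedField 𝕜]
    [SeminormedAddCommGroup E] [NormedSpace 𝕜 E] [SeminormedAddCommGroup F] [NormedSpace 𝕜 F]
    {T : E →L[𝕜] E} {S : (E →L[𝕜] F) →L[𝕜] (E →L[𝕜] F)} (hS : ∀ φ y, S φ y = φ (T y))
    (k : ℕ) (φ : E →L[𝕜] F) (y : E) : (S ^ k) φ y = φ ((T ^ k) y) := by
  induction k generalizing φ with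
  | zero => rfl
  | succ k ih => rw [pow_succ, pow_succ', mul_apply_eq_comp, mul_apply_eq_comp, ih, hS]

theorem opNorm_le_opNorm_add_of_apply_eq_zero {𝕜 E F : Type*} [NontriviallyNormedField 𝕜]
    [NormedAddCommGroup E] [NormedSpace 𝕜 E] [SeminormedAddCommGroup F] [NormedSpace 𝕜 F]
    {φ ψ : E →L[𝕜] F} {x : E} (hx : x ≠ 0) (hφx : ‖φ x‖ = ‖φ‖ * ‖x‖) (hψx : ψ x = 0) :
    ‖φ‖ ≤ ‖φ + ψ‖ := by
  refine le_of_mul_le_mul_right ?_ (norm_pos_iff.mpr hx)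
  calc ‖φ‖ * ‖x‖ = ‖(φ + ψ) x‖ := by rw [add_apply, hψx, add_zero, hφx]
    _ ≤ ‖φ + ψ‖ * ‖x‖ := le_opNorm _ x

end ContinuousLinearMap

/-- Proposition 7.2: if `ℓ` is a norming functional for `x` and `ℓ(Tᵏx) = 0` for all
`k ≥ 1` (i.e. `x` is `T`-inner), then `ℓ` is `T*`-inner in the Birkhoff–James sense,
where `T*` is the Banach-space adjoint, `(T*ℓ)(y) = ℓ(Ty)`. -/
theorem stmt17 {X : Type*} [NormedAddCommGroup X] [NormedSpace ℂ X]
    (T : X →L[ℂ] X)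
    (Tstar : (X →L[ℂ] ℂ) →L[ℂ] (X →L[ℂ] ℂ))
    (hTstar : ∀ (ℓ : X →L[ℂ] ℂ) (y : X), Tstar ℓ y = ℓ (T y))
    (x : X) (hx : x ≠ 0)
    (ℓ : X →L[ℂ] ℂ) (hℓ : ‖ℓ‖ = 1) (hℓx : ℓ x = (‖x‖ : ℂ))
    (h : ∀ k : ℕ, 1 ≤ k → ℓ ((T ^ k) x) = 0) :
    ∀ k : ℕ, 1 ≤ k → ∀ β : ℂ, ‖ℓ‖ ≤ ‖ℓ + β • (Tstar ^ k) ℓ‖ := by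
  intro k hk β
  have hℓ_norming : ‖ℓ x‖ = ‖ℓ‖ * ‖x‖ := by rw [hℓx, hℓ, one_mul, Complex.norm_real, norm_norm]
  refine ContinuousLinearMap.opNorm_le_opNorm_add_of_apply_eq_zero hx hℓ_norming ?_
  rw [smul_apply, ContinuousLinearMap.pow_apply_eq_apply_pow hTstar, h k hk, smul_zero]
end
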